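/- Let A, B, C be noncollinear points in the plane with a = dist B C, b = dist A C, c = dist A B satisfying a ≤ b ≤ c, and angles β = ∠ A B C, γ = ∠ B C A. For a point D with dist D B = dist D C set f(D) := max( 2·dist(B,D)/a , (dist(A,D) + dist(B,D))/b ). If tan β ≤ sin γ, then b < c, the perpendicular bisector of B and C meets the segment [A, B] in a unique point D₀, f(D₀) = c/b, and f(D) ≥ c/b for every point D equidistant from B and C. Hence the minimum of f over the perpendicular bisector of B and C equals c/b and is attained at D₀. -/
import Mathlib

set_option maxHeartbeats 800000

open EuclideanGeometry

private theorem sq_inj_aux {x y : ℝ} (hx : 0 ≤ x) (hy : 0 ≤ y) (h : x ^ 2 = y ^ 2) :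
    x = y := by rw [← Real.sqrt_sq hx, h, Real.sqrt_sq hy]

/-- The `tan β ≤ sin γ` case of the 3-robot gathering problem with one byzantine
robot: the perpendicular bisector of `B` and `C` meets the segment `[A, B]` in a
unique point `D₀`, the competitive-ratio function `f` takes value `c/b` at `D₀`,
and `f(D) ≥ c/b` for every point `D` equidistant from `B` and `C`; also `b < c`. -/
theorem gather_three_one_byzantine_tan_le_sin
    (A B C : EuclideanSpace ℝ (Fin 2))
    (hncol : ¬ Collinear ℝ ({A, B, C} : Set (EuclideanSpace ℝ (Fin 2))))
    (a b c : ℝ) (ha : a = dist B C) (hb : b = dist A C) (hc : c = dist A B)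
    (hab : a ≤ b) (hbc : b ≤ c)
    (β γ : ℝ) (hβ : β = ∠ A B C) (hγ : γ = ∠ B C A)
    (f : EuclideanSpace ℝ (Fin 2) → ℝ)
    (hf : ∀ D, f D = max (2 * dist B D / a) ((dist A D + dist B D) / b))
    (h : Real.tan β ≤ Real.sin γ) :
    b < c ∧
    ∃ D₀ ∈ segment ℝ A B, dist D₀ B = dist D₀ C ∧
      (∀ D ∈ segment ℝ A B, dist D B = dist D C → D = D₀) ∧
      f D₀ = c / b ∧
      ∀ D : EuclideanSpace ℝ (Fin 2), dist D B = dist D C → c / b ≤ f D := by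
  classical
  -- distinctness and positivity of sides
  have hBCne : B ≠ C := by
    rintro rfl
    apply hncol
    have : ({A, B, B} : Set (EuclideanSpace ℝ (Fin 2))) = {A, B} := by
      ext x; simp [or_comm]
    rw [this]; exact collinear_pair ℝ A B
  have hABne : A ≠ B := by
    rintro rfl
    apply hncol
    have : ({A, A, C} : Set (EuclideanSpace ℝ (Fin 2))) = {A, C} := by
      ext x; simp
    rw [this]; exact collinear_pair ℝ A C
  have hapos : 0 < a := ha ▸ dist_pos.2 hBCne
  have hcpos : 0 < c := hc ▸ dist_pos.2 hABne
  have hbpos : 0 < b := lt_of_lt_of_le hapos hab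
  -- law of cosines
  have hb2 : b ^ 2 = c ^ 2 + a ^ 2 - 2 * (c * a) * Real.cos β := by
    have h2 := EuclideanGeometry.law_cos A B C
    rw [dist_comm C B] at h2
    rw [ha, hb, hc, hβ]; linear_combination h2
  have hc2 : c ^ 2 = b ^ 2 + a ^ 2 - 2 * (b * a) * Real.cos γ := by
    have h2 := EuclideanGeometry.law_cos B C A
    rw [dist_comm B A] at h2
    rw [ha, hb, hc, hγ]; linear_combination h2
  have pβ : Real.sin β ^ 2 = 1 - Real.cos β ^ 2 := by
    have := Real.sin_sq_add_cos_sq β; linarith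
  have pγ : Real.sin γ ^ 2 = 1 - Real.cos γ ^ 2 := by
    have := Real.sin_sq_add_cos_sq γ; linarith
  have hsβ : 0 < Real.sin β := hβ ▸ EuclideanGeometry.sin_pos_of_not_collinear hncol
  have hsγnn : 0 ≤ Real.sin γ := by
    rw [hγ]
    exact Real.sin_nonneg_of_nonneg_of_le_pi (EuclideanGeometry.angle_nonneg _ _ _)
      (EuclideanGeometry.angle_le_pi _ _ _)
  have hbb : b ^ 2 ≤ c ^ 2 := pow_le_pow_left₀ hbpos.le hbc 2
  have haa : 0 < a ^ 2 := pow_pos hapos 2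
  -- cos β > 0
  have hc1 : a ^ 2 ≤ 2 * (c * a) * Real.cos β := by linarith
  have hcβpos : 0 < Real.cos β := by
    by_contra hcb
    push_neg at hcb
    have h2 : 2 * (c * a) * Real.cos β ≤ 0 :=
      mul_nonpos_of_nonneg_of_nonpos (by positivity) hcb
    linarith
  -- law of sines:  c * sin β = b * sin γ
  have hsq : (c * Real.sin β) ^ 2 = (b * Real.sin γ) ^ 2 := by
    have e1 : 4 * (a ^ 2 * (c ^ 2 * Real.cos β ^ 2)) = (c ^ 2 + a ^ 2 - b ^ 2) ^ 2 := by
      linear_combination (2 * c * a * Real.cos β + (c ^ 2 + a ^ 2 - b ^ 2)) * hb2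
    have e2 : 4 * (a ^ 2 * (b ^ 2 * Real.cos γ ^ 2)) = (b ^ 2 + a ^ 2 - c ^ 2) ^ 2 := by
      linear_combination (2 * b * a * Real.cos γ + (b ^ 2 + a ^ 2 - c ^ 2)) * hc2
    have h4a : (4 * a ^ 2 : ℝ) ≠ 0 := by positivity
    refine mul_left_cancel₀ h4a ?_
    linear_combination (4 * a ^ 2 * c ^ 2) * pβ - (4 * a ^ 2 * b ^ 2) * pγ - e1 + e2
  have hkey : c * Real.sin β = b * Real.sin γ :=
    sq_inj_aux (mul_nonneg hcpos.le hsβ.le) (mul_nonneg hbpos.le hsγnn) hsq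
  have hsγ : 0 < Real.sin γ := by
    by_contra hs
    push_neg at hs
    have h2 : b * Real.sin γ ≤ 0 := mul_nonpos_of_nonneg_of_nonpos hbpos.le hs
    have h3 : 0 < c * Real.sin β := mul_pos hcpos hsβ
    linarith
  -- from tan β ≤ sin γ : sin β ≤ cos β * sin γ
  have htan : Real.sin β ≤ Real.cos β * Real.sin γ := by
    rw [Real.tan_eq_sin_div_cos, div_le_iff₀ hcβpos] at h
    linarith [h]
  -- b ≤ c cos β
  have hbccβ : b ≤ c * Real.cos β := by
    have h1 : b * Real.sin γ ≤ c * Real.cos β * Real.sin γ := by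
      calc b * Real.sin γ = c * Real.sin β := hkey.symm
        _ ≤ c * (Real.cos β * Real.sin γ) := mul_le_mul_of_nonneg_left htan hcpos.le
        _ = c * Real.cos β * Real.sin γ := by ring
    exact le_of_mul_le_mul_right h1 hsγ
  have hcβlt1 : Real.cos β < 1 := by
    have hs2 : 0 < Real.sin β ^ 2 := pow_pos hsβ 2
    have h2 : Real.cos β ^ 2 < 1 := by linarith
    exact lt_of_le_of_lt (le_abs_self _) ((sq_lt_one_iff_abs_lt_one _).1 h2)
  have hblc : b < c := lt_of_le_of_lt hbccβ (mul_lt_of_lt_one_right hcpos hcβlt1)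
  refine ⟨hblc, ?_⟩
  -- the special point
  set t : ℝ := a / (2 * c * Real.cos β) with htdef
  have h2ccβ : 0 < 2 * c * Real.cos β := by positivity
  have ht0 : 0 < t := div_pos hapos h2ccβ
  have ha2ccβ : a ≤ 2 * c * Real.cos β := by
    have h1 : a * a ≤ (2 * c * Real.cos β) * a := by nlinarith [hc1]
    exact le_of_mul_le_mul_right h1 hapos
  have ht1 : t ≤ 1 := (div_le_one h2ccβ).2 ha2ccβ
  set D₀ : EuclideanSpace ℝ (Fin 2) := AffineMap.lineMap B A t with hD₀def
  -- angle at B is preserved along the ray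
  have hangle : ∀ s : ℝ, 0 < s → ∠ (AffineMap.lineMap B A s) B C = β := by
    intro s hs
    have hv : (AffineMap.lineMap B A s : EuclideanSpace ℝ (Fin 2)) -ᵥ B = s • (A -ᵥ B) := by
      simp [AffineMap.lineMap_apply]
    rw [hβ]
    unfold EuclideanGeometry.angle
    rw [hv, InnerProductGeometry.angle_smul_left_of_pos _ _ hs]
  -- distances from points on the ray
  have hdistB : ∀ s : ℝ, 0 ≤ s → dist (AffineMap.lineMap B A s) B = s * c := by
    intro s hs
    rw [dist_lineMap_left, Real.norm_eq_abs, abs_of_nonneg hs, dist_comm B A, hc]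
  have hdistC : ∀ s : ℝ, 0 < s →
      dist (AffineMap.lineMap B A s) C ^ 2
        = (s * c) ^ 2 + a ^ 2 - 2 * (s * c) * a * Real.cos β := by
    intro s hs
    have h2 := EuclideanGeometry.law_cos (AffineMap.lineMap B A s) B C
    rw [hangle s hs, hdistB s hs.le, dist_comm C B, ← ha] at h2
    linear_combination h2
  have htc : 2 * (t * c) * Real.cos β = a := by
    rw [htdef]; field_simp
  have hD₀B : dist D₀ B = t * c := hdistB t ht0.le
  have hD₀C : dist D₀ B = dist D₀ C := by
    rw [hD₀B]
    refine (sq_inj_aux dist_nonneg (by positivity) ?_).symm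
    rw [hdistC t ht0]
    linear_combination (-a) * htc
  have hD₀A : dist A D₀ = (1 - t) * c := by
    rw [dist_comm, hD₀def, dist_lineMap_right, Real.norm_eq_abs,
      abs_of_nonneg (by linarith : (0:ℝ) ≤ 1 - t), dist_comm B A, hc]
  have hmem : D₀ ∈ segment ℝ A B := by
    rw [segment_symm, segment_eq_image_lineMap]
    exact ⟨t, ⟨ht0.le, ht1⟩, rfl⟩
  refine ⟨D₀, hmem, hD₀C, ?_, ?_, ?_⟩
  · -- uniqueness
    intro D hDmem hDeq
    rw [segment_symm, segment_eq_image_lineMap] at hDmem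
    obtain ⟨s, ⟨hs0, hs1⟩, rfl⟩ := hDmem
    rcases eq_or_lt_of_le hs0 with hs | hs
    · exfalso
      have hDB : AffineMap.lineMap B A s = B := by rw [← hs]; simp
      rw [hDB, dist_self, ← ha] at hDeq
      exact hapos.ne hDeq
    · have h1 := hdistC s hs
      rw [← hDeq, hdistB s hs.le] at h1
      have h2 : a * a = (2 * (s * c) * Real.cos β) * a := by linear_combination -h1
      have h3 : a = 2 * (s * c) * Real.cos β := mul_right_cancel₀ hapos.ne' h2
      have hs' : s = t := by
        rw [htdef, h3]; field_simp
      rw [hs']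
  · -- value at D₀
    rw [hf, dist_comm B D₀, hD₀B, hD₀A]
    have h1 : 2 * (t * c) / a = 1 / Real.cos β := by
      rw [← htc]; field_simp
    have h2 : ((1 - t) * c + t * c) / b = c / b := by ring_nf
    rw [h1, h2]
    refine max_eq_right ?_
    rw [div_le_div_iff₀ hcβpos hbpos]
    linarith
  · -- lower bound
    intro D _
    rw [hf]
    refine le_max_of_le_right ?_
    have h1 : c ≤ dist A D + dist B D := by
      rw [hc, dist_comm B D]
      exact dist_triangle A D B
    exact div_le_div_of_nonneg_right h1 hbpos.le |>.trans_eq rfl
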